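/- arXiv:2605.27498 — 7 statements merged into one kernel-verified Lean document; each statement's English description precedes it below -/
import Mathlib

section
/- Let f : ℝ → ℝ be 2π-periodic and Φ : ℝ → ℝ be such that for every α the function θ ↦ Φ(f(θ) − f(θ + α)) is interval-integrable on [0, 2π]. Fix M, c' ∈ ℝ and β' ∈ ℝ and define g(θ) = M − f(2π − θ − β') + c' (a reverse-of-complement followed by rotation and shift). Then g is 2π-periodic and for every α ∈ ℝ, ψ_g(α) = ψ_f(α). -/
open MeasureTheory Real

/-- The continuous signature of `f` with respect to `Φ`:
`ψ_f(α) = (1/(2π)) ∫₀^{2π} Φ(f(θ) − f(θ + α)) dθ`. -/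
noncomputable def psi (Φ f : ℝ → ℝ) (α : ℝ) : ℝ :=
  (1 / (2 * π)) * ∫ θ in (0:ℝ)..(2 * π), Φ (f θ - f (θ + α))

theorem roc_rotation_shift_invariance
    (f Φ : ℝ → ℝ) (hf : Function.Periodic f (2 * π))
    (hint : ∀ α : ℝ,
      IntervalIntegrable (fun θ => Φ (f θ - f (θ + α))) volume 0 (2 * π))
    (M c' β' : ℝ) (g : ℝ → ℝ)
    (hg : ∀ θ, g θ = M - f (2 * π - θ - β') + c') :
    Function.Periodic g (2 * π) ∧ ∀ α : ℝ, psi Φ g α = psi Φ f α := by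
  constructor
  · intro θ
    rw [hg, hg]
    have : 2 * π - (θ + 2 * π) - β' = (2 * π - θ - β') - 2 * π := by ring
    rw [this, hf.sub_eq]
  · intro α
    unfold psi
    congr 1
    have key : ∀ θ, Φ (g θ - g (θ + α)) =
        (fun u => Φ (f u - f (u + α))) ((2 * π - α - β') - θ) := by
      intro θ
      simp only [hg]
      have h1 : 2 * π - α - β' - θ + α = 2 * π - θ - β' := by ring
      have h2 : 2 * π - (θ + α) - β' = 2 * π - α - β' - θ := by ring
      rw [h1, h2]
      ring_nf
    calc ∫ θ in (0:ℝ)..(2 * π), Φ (g θ - g (θ + α))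
        = ∫ θ in (0:ℝ)..(2 * π),
            (fun u => Φ (f u - f (u + α))) ((2 * π - α - β') - θ) := by
          simp only [key]
      _ = ∫ u in ((2 * π - α - β') - 2 * π)..((2 * π - α - β') - 0),
            Φ (f u - f (u + α)) := by
          exact intervalIntegral.integral_comp_sub_left (a := 0) (b := 2 * π)
            (fun u => Φ (f u - f (u + α))) (2 * π - α - β')
      _ = ∫ u in (0:ℝ)..(2 * π), Φ (f u - f (u + α)) := by
          have hper : Function.Periodic (fun u => Φ (f u - f (u + α))) (2 * π) := by
            intro u
            simp only []
            rw [add_right_comm, hf, hf]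
          have := hper.intervalIntegral_add_eq ((2 * π - α - β') - 2 * π) 0
          simpa [sub_zero, zero_add, sub_add_cancel] using this
end

section
/- Let m ≥ 2 and let f, g : ZMod m → ℝ both be in general position and lag-homometric. Suppose both are in canonical form: f(0) = 0 ≤ f(j) for all j, and g(0) = 0 ≤ g(j) for all j. Then the maximum value of f equals the maximum value of g, and the (unique) index at which f attains its maximum equals the (unique) index at which g attains its maximum. -/
/-- The lag-difference multiset `Δ_f(k) = {f(j) − f(j + k) : j ∈ ZMod m}`. -/
def Delta {m : ℕ} [NeZero m] (f : ZMod m → ℝ) (k : ZMod m) : Multiset ℝ :=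
  (Finset.univ : Finset (ZMod m)).val.map (fun j => f j - f (j + k))

/-- `f` is in general position: injective, and all nonzero pairwise
differences are distinct. -/
def GenPos {m : ℕ} (f : ZMod m → ℝ) : Prop :=
  Function.Injective f ∧
    ∀ j j' i i' : ZMod m, j ≠ j' → i ≠ i' →
      f j - f j' = f i - f i' → j = i ∧ j' = i'

theorem canonical_max_agree
    (m : ℕ) [NeZero m] (hm : 2 ≤ m) (f g : ZMod m → ℝ)
    (hf : GenPos f) (hg : GenPos g)
    (hlag : ∀ k : ZMod m, Delta f k = Delta g k)
    (hcanf : f 0 = 0 ∧ ∀ j, 0 ≤ f j) (hcang : g 0 = 0 ∧ ∀ j, 0 ≤ g j)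
    (jf jg : ZMod m) (hjf : ∀ j, f j ≤ f jf) (hjg : ∀ j, g j ≤ g jg) :
    f jf = g jg ∧ jf = jg := by
  obtain ⟨hf0, hfpos⟩ := hcanf
  obtain ⟨hg0, hgpos⟩ := hcang
  haveI : Fact (1 < m) := ⟨hm⟩
  have h1 : (1 : ZMod m) ≠ 0 := one_ne_zero
  have hf1 : 0 < f 1 := lt_of_le_of_ne (hfpos 1) (fun h => h1 (hf.1 (by rw [hf0, ← h])))
  have hg1 : 0 < g 1 := lt_of_le_of_ne (hgpos 1) (fun h => h1 (hg.1 (by rw [hg0, ← h])))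
  have hfM : 0 < f jf := lt_of_lt_of_le hf1 (hjf 1)
  have hgM : 0 < g jg := lt_of_lt_of_le hg1 (hjg 1)
  have hjf0 : jf ≠ 0 := fun h => by rw [h, hf0] at hfM; exact lt_irrefl 0 hfM
  have hjg0 : jg ≠ 0 := fun h => by rw [h, hg0] at hgM; exact lt_irrefl 0 hgM
  have memf : f jf ∈ Delta f (-jf) := by
    simp only [Delta, Multiset.mem_map]
    exact ⟨jf, Finset.mem_univ jf, by simp [hf0]⟩
  have memg : g jg ∈ Delta g (-jg) := by
    simp only [Delta, Multiset.mem_map]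
    exact ⟨jg, Finset.mem_univ jg, by simp [hg0]⟩
  -- f jf appears in Delta g (-jf)
  rw [hlag (-jf)] at memf
  rw [← hlag (-jg)] at memg
  simp only [Delta, Multiset.mem_map] at memf memg
  obtain ⟨j, -, hj⟩ := memf
  obtain ⟨i, -, hi⟩ := memg
  have hle1 : f jf ≤ g jg := by
    rw [← hj]
    have := hgpos (j + -jf)
    have := hjg j
    linarith
  have hle2 : g jg ≤ f jf := by
    rw [← hi]
    have := hfpos (i + -jg)
    have := hjf i
    linarith
  have hMM : f jf = g jg := le_antisymm hle1 hle2
  refine ⟨hMM, ?_⟩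
  -- now use general position of g on hj : g j - g (j + -jf) = f jf = g jg - g 0
  have hne1 : j ≠ j + -jf := by
    intro h
    have : (-jf : ZMod m) = 0 := by
      have := h.symm
      rwa [add_eq_left] at this
    exact hjf0 (neg_eq_zero.mp this)
  have heq : g j - g (j + -jf) = g jg - g 0 := by rw [hj, hMM, hg0, sub_zero]
  obtain ⟨h1', h2'⟩ := hg.2 j (j + -jf) jg 0 hne1 hjg0 heq
  have : j = jf := by
    have := h2'
    rw [add_neg_eq_zero] at this
    exact this
  rw [← this, h1']
end

section
/- Let m ≥ 3 and let f, g : ZMod m → ℤ be bijections onto {1, …, m} that are lag-homometric, with positions satisfying π_f(1) = π_g(1) = 0 and π_f(m) = π_g(m). If π_f(2) ≠ π_g(2), then π_g(m−1) = π_f(m) − π_f(2) in ZMod m. -/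
/-- The lag-difference multiset `Δ_f(k) = {f(j) − f(j + k) : j ∈ ZMod m}`. -/
def DeltaZ {m : ℕ} [NeZero m] (f : ZMod m → ℤ) (k : ZMod m) : Multiset ℤ :=
  (Finset.univ : Finset (ZMod m)).val.map (fun j => f j - f (j + k))

/-- `f : ZMod m → ℤ` is a permutation of `{1, …, m}` on the discrete circle:
a bijection onto `{1, …, m} ⊆ ℤ`. -/
def IsPermOn (m : ℕ) (f : ZMod m → ℤ) : Prop :=
  Function.Injective f ∧ Set.range f = Set.Icc (1 : ℤ) (m : ℤ)

theorem second_component_position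
    (m : ℕ) [NeZero m] (hm : 3 ≤ m) (f g : ZMod m → ℤ)
    (hf : IsPermOn m f) (hg : IsPermOn m g)
    (hlag : ∀ k : ZMod m, DeltaZ f k = DeltaZ g k)
    (hf1 : f 0 = 1) (hg1 : g 0 = 1)
    -- positions of the values m, 2 and m−1 (π_f(v) is the unique index with f(π_f(v)) = v)
    (pfm pgm pf2 pg2 pgm1 : ZMod m)
    (hpfm : f pfm = (m : ℤ)) (hpgm : g pgm = (m : ℤ)) (hmm : pfm = pgm)
    (hpf2 : f pf2 = 2) (hpg2 : g pg2 = 2)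
    (hpgm1 : g pgm1 = (m : ℤ) - 1)
    (hne : pf2 ≠ pg2) :
    pgm1 = pfm - pf2 := by
  set k : ZMod m := pf2 - pfm with hk
  have hmem : ((m : ℤ) - 2) ∈ DeltaZ f k := by
    rw [DeltaZ, Multiset.mem_map]
    refine ⟨pfm, by simp, ?_⟩
    have : pfm + k = pf2 := by rw [hk]; ring
    rw [this, hpfm, hpf2]
  rw [hlag k, DeltaZ, Multiset.mem_map] at hmem
  obtain ⟨j, -, hj⟩ := hmem
  -- bounds on values of g
  have hrange : ∀ x : ZMod m, 1 ≤ g x ∧ g x ≤ (m : ℤ) := by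
    intro x
    have : g x ∈ Set.range g := ⟨x, rfl⟩
    rw [hg.2] at this
    exact this
  have h1 := hrange j
  have h2 := hrange (j + k)
  have hgj : g j = (m : ℤ) - 1 ∨ g j = (m : ℤ) := by omega
  rcases hgj with h | h
  · -- g j = m - 1, so g (j+k) = 1, so j + k = 0
    have hj1 : g (j + k) = 1 := by omega
    have hjv : j = pgm1 := hg.1 (by rw [h, hpgm1])
    have hjk0 : j + k = 0 := hg.1 (by rw [hj1, hg1])
    have : pgm1 + k = 0 := by rw [← hjv]; exact hjk0
    have := this
    rw [hk] at this
    linear_combination (norm := ring_nf) this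
  · -- g j = m, so g (j+k) = 2, so j = pgm and j + k = pg2, contradiction
    have hj2 : g (j + k) = 2 := by omega
    have hjv : j = pgm := hg.1 (by rw [h, hpgm])
    have hjk : j + k = pg2 := hg.1 (by rw [hj2, hpg2])
    exfalso
    apply hne
    rw [hjv, ← hmm, hk] at hjk
    linear_combination hjk
end

section
/- Let f₁, f₂ : ℝ → ℝ be 2π-periodic measurable functions with values in (0, 1], and suppose there exists β ∈ ℝ such that sup_{θ ∈ [0, 2π)} |f₁(θ) − f₂(θ + β)| ≤ ε. Let ψ₁, ψ₂ be the continuous signatures of f₁, f₂ with Φ(z) = exp(−z). Then ( (1/(2π)) ∫₀^{2π} (ψ₁(α) − ψ₂(α))² dα )^{1/2} ≤ 2eε, where e is Euler's number. -/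
open MeasureTheory Real

/-!
Replacing `f₂` by its shift `θ ↦ f₂ (θ + β)` leaves the signature unchanged (the integrand is
`2π`-periodic in `θ`), and by periodicity the shifted function is `ε`-close to `f₁` everywhere.
For values in `[0, 1]` the exponents `f (θ + α) - f θ` are at most `1` and those of `f₁` and the
shifted `f₂` differ by at most `2ε`; as `exp` is `e`-Lipschitz on `(-∞, 1]`, the signatures differ
by at most `2eε` at every `α`, which bounds their `L²` mean as well.
-/

open Set Function
open scoped Interval

lemma abs_exp_sub_exp_le_of_le {x y c : ℝ} (hx : x ≤ c) (hy : y ≤ c) :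
    |exp x - exp y| ≤ exp c * |x - y| := by
  wlog hyx : y ≤ x generalizing x y
  · rw [abs_sub_comm, abs_sub_comm x]
    exact this hy hx (le_of_not_ge hyx)
  rw [abs_of_nonneg (sub_nonneg.2 (exp_le_exp.2 hyx)), abs_of_nonneg (sub_nonneg.2 hyx)]
  calc exp x - exp y = exp x * (1 - exp (y - x)) := by rw [exp_sub]; field_simp
    _ ≤ exp x * (x - y) :=
      mul_le_mul_of_nonneg_left (by linarith [add_one_le_exp (y - x)]) (exp_pos x).le
    _ ≤ exp c * (x - y) := by gcongr

lemma Function.Periodic.forall_of_forall_mem_Ico₀ {α β : Type*} [AddCommGroup α] [LinearOrder α]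
    [IsOrderedAddMonoid α] [Archimedean α] {F : α → β} {c : α} {p : β → Prop}
    (hF : Periodic F c) (hc : 0 < c) (h : ∀ x ∈ Ico 0 c, p (F x)) (x : α) : p (F x) := by
  obtain ⟨y, hy, hxy⟩ := hF.exists_mem_Ico₀ hc x
  exact hxy ▸ h y hy

lemma abs_average_le {h : ℝ → ℝ} {a b C : ℝ} (hab : a < b) (hC : ∀ x ∈ Ι a b, |h x| ≤ C) :
    |(1 / (b - a)) * ∫ x in a..b, h x| ≤ C := by
  have hba : 0 < b - a := sub_pos.2 hab
  have hint : |∫ x in a..b, h x| ≤ C * (b - a) := by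
    simpa [abs_of_pos hba] using intervalIntegral.norm_integral_le_of_norm_le_const (f := h) hC
  rw [abs_mul, abs_of_pos (by positivity : 0 < 1 / (b - a))]
  calc 1 / (b - a) * |∫ x in a..b, h x| ≤ 1 / (b - a) * (C * (b - a)) := by gcongr
    _ = C := by field_simp

lemma sqrt_average_sq_le {h : ℝ → ℝ} {a b C : ℝ} (hab : a < b) (hC : ∀ x ∈ Ι a b, |h x| ≤ C) :
    √((1 / (b - a)) * ∫ x in a..b, h x ^ 2) ≤ C := by
  have hC₀ : 0 ≤ C := (abs_nonneg _).trans (hC b (right_mem_uIoc.2 hab))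
  have hsq : ∀ x ∈ Ι a b, |h x ^ 2| ≤ C ^ 2 := fun x hx => by
    rw [abs_pow]; gcongr; exact hC x hx
  rw [sqrt_le_left hC₀]
  exact (le_abs_self _).trans (abs_average_le hab hsq)

lemma psi_comp_add_right (Φ : ℝ → ℝ) {f : ℝ → ℝ} (hf : Periodic f (2 * π)) (β α : ℝ) :
    psi Φ (fun θ => f (θ + β)) α = psi Φ f α := by
  set F : ℝ → ℝ := fun u => Φ (f u - f (u + α))
  have hF : Periodic F (2 * π) := (hf.sub (hf.add_const α)).comp Φ
  unfold psi
  congr 1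
  simp_rw [add_right_comm _ α β]
  change ∫ θ in (0:ℝ)..(2 * π), F (θ + β) = ∫ θ in (0:ℝ)..(2 * π), F θ
  calc ∫ θ in (0:ℝ)..(2 * π), F (θ + β)
      = ∫ u in 0 + β..2 * π + β, F u := intervalIntegral.integral_comp_add_right F β
    _ = ∫ u in (0:ℝ)..(2 * π), F u := by
      simpa [add_comm] using hF.intervalIntegral_add_eq β 0

lemma abs_psi_sub_psi_le {Φ f g : ℝ → ℝ} {α C : ℝ}
    (hf : IntervalIntegrable (fun θ => Φ (f θ - f (θ + α))) volume 0 (2 * π))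
    (hg : IntervalIntegrable (fun θ => Φ (g θ - g (θ + α))) volume 0 (2 * π))
    (hC : ∀ θ, |Φ (f θ - f (θ + α)) - Φ (g θ - g (θ + α))| ≤ C) :
    |psi Φ f α - psi Φ g α| ≤ C := by
  have := abs_average_le two_pi_pos (fun θ _ => hC θ)
  rwa [sub_zero, intervalIntegral.integral_sub hf hg, mul_sub] at this

lemma intervalIntegrable_exp_neg_sub {f : ℝ → ℝ} (hm : Measurable f)
    (hr : ∀ θ, f θ ∈ Icc (0:ℝ) 1) (α a b : ℝ) :
    IntervalIntegrable (fun θ => exp (-(f θ - f (θ + α)))) volume a b := by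
  refine (intervalIntegrable_const (c := exp 1)).mono_fun
    (hm.sub (hm.comp (measurable_add_const α))).neg.exp.aestronglyMeasurable
    (Filter.Eventually.of_forall fun θ => ?_)
  have h₀ := hr θ
  have h₁ := hr (θ + α)
  simp only [norm_eq_abs, abs_of_pos (exp_pos _), exp_le_exp]
  linarith [h₀.1, h₁.2]

lemma abs_psi_exp_neg_sub_le {f g : ℝ → ℝ} (hmf : Measurable f) (hmg : Measurable g)
    (hf : ∀ θ, f θ ∈ Icc (0:ℝ) 1) (hg : ∀ θ, g θ ∈ Icc (0:ℝ) 1) {ε : ℝ}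
    (hfg : ∀ θ, |f θ - g θ| ≤ ε) (α : ℝ) :
    |psi (fun z => exp (-z)) f α - psi (fun z => exp (-z)) g α| ≤ 2 * exp 1 * ε := by
  refine abs_psi_sub_psi_le (intervalIntegrable_exp_neg_sub hmf hf α _ _)
    (intervalIntegrable_exp_neg_sub hmg hg α _ _) fun θ => ?_
  have hexp : ∀ x y, x ∈ Icc (0:ℝ) 1 → y ∈ Icc (0:ℝ) 1 → -(x - y) ≤ 1 :=
    fun x y hx hy => by linarith [hx.1, hy.2]
  have hdiff : |-(f θ - f (θ + α)) - -(g θ - g (θ + α))| ≤ 2 * ε := by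
    have h₀ := abs_le.1 (hfg θ)
    have h₁ := abs_le.1 (hfg (θ + α))
    rw [abs_le]; constructor <;> linarith [h₀.1, h₀.2, h₁.1, h₁.2]
  calc |exp (-(f θ - f (θ + α))) - exp (-(g θ - g (θ + α)))|
      ≤ exp 1 * |-(f θ - f (θ + α)) - -(g θ - g (θ + α))| :=
        abs_exp_sub_exp_le_of_le (hexp _ _ (hf θ) (hf _)) (hexp _ _ (hg θ) (hg _))
    _ ≤ exp 1 * (2 * ε) := by gcongr
    _ = 2 * exp 1 * ε := by ring

theorem signature_lipschitz_in_star_distance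
    (f₁ f₂ : ℝ → ℝ)
    (h₁ : Function.Periodic f₁ (2 * π)) (h₂ : Function.Periodic f₂ (2 * π))
    (hm₁ : Measurable f₁) (hm₂ : Measurable f₂)
    (hr₁ : ∀ θ, f₁ θ ∈ Set.Ioc (0:ℝ) 1) (hr₂ : ∀ θ, f₂ θ ∈ Set.Ioc (0:ℝ) 1)
    (ε β : ℝ)
    (hβ : ∀ θ ∈ Set.Ico (0:ℝ) (2 * π), |f₁ θ - f₂ (θ + β)| ≤ ε) :
    Real.sqrt ((1 / (2 * π)) * ∫ α in (0:ℝ)..(2 * π),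
        (psi (fun z => Real.exp (-z)) f₁ α
          - psi (fun z => Real.exp (-z)) f₂ α) ^ 2)
      ≤ 2 * Real.exp 1 * ε := by
  have hclose : ∀ θ, |f₁ θ - f₂ (θ + β)| ≤ ε :=
    ((h₁.sub (h₂.add_const β)).comp abs).forall_of_forall_mem_Ico₀ (p := (· ≤ ε)) two_pi_pos hβ
  have hpointwise : ∀ α, |psi (fun z => exp (-z)) f₁ α - psi (fun z => exp (-z)) f₂ α|
      ≤ 2 * exp 1 * ε := fun α => by
    rw [← psi_comp_add_right _ h₂ β α]
    exact abs_psi_exp_neg_sub_le hm₁ (hm₂.comp (measurable_add_const β))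
      (fun θ => Ioc_subset_Icc_self (hr₁ θ)) (fun θ => Ioc_subset_Icc_self (hr₂ _)) hclose α
  simpa using sqrt_average_sq_le two_pi_pos fun α _ => hpointwise α
end

section
/- Let f, g : ZMod m → ℝ be lag-homometric. Then for any c ∈ ℝ, the functions f and RoC_c(g) are lag-homometric, where RoC_c(g)(j) = c − g(−j). -/
def negSub {m : ℕ} (k : ZMod m) : ZMod m ≃ ZMod m :=
  ⟨fun j => -j - k, fun j => -j - k, by intro j; ring, by intro j; ring⟩

@[simp] lemma negSub_apply {m : ℕ} (k j : ZMod m) : negSub k j = -j - k := rfl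

/-- The reverse-of-complement of `g` with respect to `c`: `RoC_c(g)(j) = c − g(−j)`. -/
def RoC {m : ℕ} (c : ℝ) (g : ZMod m → ℝ) : ZMod m → ℝ :=
  fun j => c - g (-j)

theorem roc_preserves_lag_homometry
    (m : ℕ) [NeZero m] (f g : ZMod m → ℝ)
    (hlag : ∀ k : ZMod m, Delta f k = Delta g k) (c : ℝ) :
    ∀ k : ZMod m, Delta f k = Delta (RoC c g) k := by
  intro k
  rw [hlag k]
  unfold Delta RoC
  have he : (Finset.univ : Finset (ZMod m)) = Finset.univ.map (negSub k).toEmbedding :=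
    (Finset.map_univ_equiv (negSub k)).symm
  conv_rhs => rw [he]
  rw [Finset.map_val, Multiset.map_map]
  apply Multiset.map_congr rfl
  intro j _
  show g j - g (j + k) = (c - g (-(negSub k j))) - (c - g (-(negSub k j + k)))
  show g j - g (j + k) = (c - g (-(-j - k))) - (c - g (-(-j - k + k)))
  have h1 : -(-j - k) = j + k := by ring
  have h2 : -(-j - k + k) = j := by ring
  rw [h1, h2]
  ring
end

section
/- Let m ≥ 1 and let f, g : ZMod m → ℝ be lag-homometric. Then max_j f(j) − min_j f(j) = max_j g(j) − min_j g(j). Moreover, if f and g are both injective, and i_f, j_f denote the unique indices where f attains its maximum and minimum respectively (and similarly i_g, j_g for g), then i_f − j_f = i_g − j_g in ZMod m. -/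
theorem range_and_extreme_positions_preserved
    (m : ℕ) [NeZero m] (f g : ZMod m → ℝ)
    (hlag : ∀ k : ZMod m, Delta f k = Delta g k)
    (i_f j_f i_g j_g : ZMod m)
    (hif : ∀ j, f j ≤ f i_f) (hjf : ∀ j, f j_f ≤ f j)
    (hig : ∀ j, g j ≤ g i_g) (hjg : ∀ j, g j_g ≤ g j) :
    f i_f - f j_f = g i_g - g j_g ∧
      (Function.Injective f → Function.Injective g →
        i_f - j_f = i_g - j_g) := by
  have aux : ∀ (f g : ZMod m → ℝ), (∀ k : ZMod m, Delta f k = Delta g k) →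
      ∀ i j : ZMod m, ∃ l : ZMod m, g l - g (l + (j - i)) = f i - f j := by
    intro f g hlag i j
    have hmem : f i - f j ∈ Delta f (j - i) := by
      simp only [Delta, Multiset.mem_map]
      exact ⟨i, Finset.mem_univ i, by rw [add_sub_cancel]⟩
    rw [hlag] at hmem
    simp only [Delta, Multiset.mem_map] at hmem
    obtain ⟨l, _, hl⟩ := hmem
    exact ⟨l, hl⟩
  obtain ⟨l, hl⟩ := aux f g hlag i_f j_f
  obtain ⟨l', hl'⟩ := aux g f (fun k => (hlag k).symm) i_g j_g
  have h1 : f i_f - f j_f ≤ g i_g - g j_g := by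
    rw [← hl]; linarith [hig l, hjg (l + (j_f - i_f))]
  have h2 : g i_g - g j_g ≤ f i_f - f j_f := by
    rw [← hl']; linarith [hif l', hjf (l' + (j_g - i_g))]
  have heq : f i_f - f j_f = g i_g - g j_g := le_antisymm h1 h2
  refine ⟨heq, fun hf hg => ?_⟩
  have hgl : g l = g i_g := le_antisymm (hig l)
    (by linarith [hjg (l + (j_f - i_f)), hl.trans heq])
  have hgl2 : g (l + (j_f - i_f)) = g j_g := le_antisymm
    (by linarith [hig l, hl.trans heq]) (hjg _)
  have e1 : l = i_g := hg hgl
  have e2 : l + (j_f - i_f) = j_g := hg hgl2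
  rw [e1] at e2
  linear_combination -e2
end

section
/- Let m ≥ 3 and let f, g : ZMod m → ℤ be bijections onto {1, …, m} that are lag-homometric, with π_f(1) = π_g(1) = 0, π_f(m) = π_g(m), and π_f(2) = π_g(2). Then π_f(m−1) = π_g(m−1). -/
lemma count_aux {m : ℕ} [NeZero m] (hm : 3 ≤ m) (f : ZMod m → ℤ)
    (hf : IsPermOn m f) (hf1 : f 0 = 1) (pm p2 pm1 : ZMod m)
    (hpm : f pm = (m : ℤ)) (hp2 : f p2 = 2) (hpm1 : f pm1 = (m : ℤ) - 1)
    (k : ZMod m) :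
    Multiset.count ((m : ℤ) - 2) (DeltaZ f k)
      = (if pm + k = p2 then 1 else 0) + (if pm1 + k = 0 then 1 else 0) := by
  obtain ⟨hinj, hrange⟩ := hf
  have hmem : ∀ j, 1 ≤ f j ∧ f j ≤ (m : ℤ) := by
    intro j
    have : f j ∈ Set.Icc (1 : ℤ) (m : ℤ) := hrange ▸ Set.mem_range_self j
    exact Set.mem_Icc.mp this
  have hm3 : (3 : ℤ) ≤ (m : ℤ) := by exact_mod_cast hm
  have hne : pm ≠ pm1 := by
    intro h
    have := hpm
    rw [h, hpm1] at this
    omega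
  have hchar : ∀ j : ZMod m, ((m : ℤ) - 2 = f j - f (j + k)) ↔
      ((j = pm ∧ pm + k = p2) ∨ (j = pm1 ∧ pm1 + k = 0)) := by
    intro j
    constructor
    · intro h
      have h1 := hmem j
      have h2 := hmem (j + k)
      have hfj : f j = (m : ℤ) ∨ f j = (m : ℤ) - 1 := by omega
      rcases hfj with h' | h'
      · left
        have hjk : f (j + k) = 2 := by omega
        have e1 : j = pm := hinj (h'.trans hpm.symm)
        have e2 : j + k = p2 := hinj (hjk.trans hp2.symm)
        exact ⟨e1, by rw [← e1]; exact e2⟩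
      · right
        have hjk : f (j + k) = 1 := by omega
        have e1 : j = pm1 := hinj (h'.trans hpm1.symm)
        have e2 : j + k = 0 := hinj (hjk.trans hf1.symm)
        exact ⟨e1, by rw [← e1]; exact e2⟩
    · rintro (⟨rfl, h⟩ | ⟨rfl, h⟩)
      · rw [h, hpm, hp2]
      · rw [h, hpm1, hf1]; ring
  have : Multiset.count ((m : ℤ) - 2) (DeltaZ f k)
      = (Finset.univ.filter (fun j : ZMod m => (m : ℤ) - 2 = f j - f (j + k))).card := by
    rw [DeltaZ, Multiset.count_map]
    rfl
  rw [this]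
  rw [Finset.filter_congr (fun j _ => hchar j)]
  by_cases hA : pm + k = p2 <;> by_cases hB : pm1 + k = 0 <;>
    simp [hA, hB, Finset.filter_eq', Finset.filter_or, Finset.card_union_of_disjoint,
      Finset.disjoint_singleton_left, hne, hne.symm]

theorem next_extreme_positions_agree
    (m : ℕ) [NeZero m] (hm : 3 ≤ m) (f g : ZMod m → ℤ)
    (hf : IsPermOn m f) (hg : IsPermOn m g)
    (hlag : ∀ k : ZMod m, DeltaZ f k = DeltaZ g k)
    (hf1 : f 0 = 1) (hg1 : g 0 = 1)
    -- positions of the values m, 2 and m−1 (π_f(v) is the unique index with f(π_f(v)) = v)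
    (pfm pgm pf2 pg2 pfm1 pgm1 : ZMod m)
    (hpfm : f pfm = (m : ℤ)) (hpgm : g pgm = (m : ℤ)) (hmm : pfm = pgm)
    (hpf2 : f pf2 = 2) (hpg2 : g pg2 = 2) (h22 : pf2 = pg2)
    (hpfm1 : f pfm1 = (m : ℤ) - 1) (hpgm1 : g pgm1 = (m : ℤ) - 1) :
    pfm1 = pgm1 := by
  subst hmm h22
  have hcf := count_aux hm f hf hf1 pfm pf2 pfm1 hpfm hpf2 hpfm1 (-pfm1)
  have hcg := count_aux hm g hg hg1 pfm pf2 pgm1 hpgm hpg2 hpgm1 (-pfm1)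
  rw [hlag] at hcf
  have h := hcf.symm.trans hcg
  have h1 : pfm1 + -pfm1 = 0 := by ring
  simp only [h1, if_true] at h
  by_cases hB : pgm1 + -pfm1 = 0
  · exact (sub_eq_zero.mp (by rw [sub_eq_add_neg]; exact hB)).symm
  · exfalso
    simp only [hB, if_false] at h
    split_ifs at h <;> omega
end
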